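/- arXiv:1908.00872 — 4 statements merged into one kernel-verified Lean document; each statement's English description precedes it below -/
import Mathlib

section
/- Let X be an n×n doubly stochastic matrix, V an n×(n−1) matrix with orthonormal columns spanning e^⊥, Y = V^T X V, and y = vec(Y). Then for symmetric matrices A, B ∈ ℝ^{n×n}, tr(A X B X^T) = ⟨Ṽ B ⊗ Ṽ A, yy^T⟩ + (2/n) vec(V^T B J A V)^T y + (1/n²)(e^T A e)(e^T B e), where Ṽ A = V^T A V, Ṽ B = V^T B V and J = ee^T. More precisely: tr(A X B X^T) = tr(ÃYB̃Y^T) + (2/n)tr(B J A V Y V^T) + (1/n²)(e^T A e)(e^T B e), where Ã = V^T A V, B̃ = V^T B V. -/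
/-!
The columns of `V` are an orthonormal basis of `e^⊥`, so `V Vᵀ = I - J/n`: the difference of
the two sides is a symmetric idempotent of trace `n - 1 - (n - 1) = 0`, hence zero. Conjugating
`X` by this projection and using `X e = Xᵀ e = e` gives `X = J/n + V Y Vᵀ`. Substituting this into
`tr(A X B Xᵀ)` leaves four terms; the two cross terms agree because `A`, `B` and `J` are symmetric.
-/

open Matrix

namespace Matrix

variable {ι κ R : Type*} [Fintype ι] [Fintype κ]

theorem eq_zero_of_isHermitian_of_isIdempotentElem_of_trace_eq_zero [PartialOrder R] [Ring R]
    [StarRing R] [StarOrderedRing R] [NoZeroDivisors R] {M : Matrix ι ι R}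
    (hM : M.IsHermitian) (hMM : IsIdempotentElem M) (htr : M.trace = 0) : M = 0 :=
  trace_mul_conjTranspose_self_eq_zero_iff.mp (by rw [hM.eq, hMM.eq, htr])

section CommSemiring

variable [CommSemiring R]

local notation "𝟙" => vecMulVec (1 : ι → R) (1 : ι → R)

theorem vecMulVec_one_one_mul_self : 𝟙 * 𝟙 = (Fintype.card ι : R) • 𝟙 := by
  rw [vecMulVec_mul_vecMulVec, one_dotProduct_one, vecMulVec_smul]

theorem trace_mul_vecMulVec_one_one_mul_vecMulVec_one_one (A B : Matrix ι ι R) :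
    trace (A * 𝟙 * B * 𝟙) = (1 ⬝ᵥ A *ᵥ 1) * (1 ⬝ᵥ B *ᵥ 1) := by
  rw [mul_vecMulVec A, vecMulVec_mul, vecMulVec_mul_vecMulVec, trace_vecMulVec, dotProduct_smul,
    smul_eq_mul, ← dotProduct_mulVec, dotProduct_comm (A *ᵥ 1), mul_comm]

theorem trace_mul_conj_mul_transpose_conj (A B : Matrix ι ι R) (V : Matrix ι κ R)
    (Y : Matrix κ κ R) :
    trace (A * (V * Y * Vᵀ) * B * (V * Y * Vᵀ)ᵀ) =
      trace (Vᵀ * A * V * Y * (Vᵀ * B * V) * Yᵀ) :=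
  calc trace (A * (V * Y * Vᵀ) * B * (V * Y * Vᵀ)ᵀ)
      = trace ((A * V * Y * Vᵀ * B * V * Yᵀ) * Vᵀ) := by
        simp only [transpose_mul, transpose_transpose, Matrix.mul_assoc]
    _ = trace (Vᵀ * (A * V * Y * Vᵀ * B * V * Yᵀ)) := trace_mul_comm _ _
    _ = trace (Vᵀ * A * V * Y * (Vᵀ * B * V) * Yᵀ) := by simp only [Matrix.mul_assoc]

theorem trace_mul_mul_mul_transpose_of_isSymm {A B C : Matrix ι ι R} (hA : A.IsSymm)
    (hB : B.IsSymm) (hC : C.IsSymm) (N : Matrix ι ι R) :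
    trace (A * C * B * Nᵀ) = trace (B * C * A * N) :=
  calc trace (A * C * B * Nᵀ) = trace (N * (B * C * A)) := by
        rw [← trace_transpose]
        simp only [transpose_mul, transpose_transpose, hA.eq, hB.eq, hC.eq, Matrix.mul_assoc]
    _ = trace (B * C * A * N) := trace_mul_comm _ _

end CommSemiring

section Field

variable {K : Type*} [Field K] [DecidableEq ι]

local notation "𝟙" => vecMulVec (1 : ι → K) (1 : ι → K)

theorem eq_smul_vecMulVec_one_one_add_conj_of_mul_transpose_eq {V : Matrix ι κ K}
    (hn : (Fintype.card ι : K) ≠ 0) (hV : V * Vᵀ = 1 - (Fintype.card ι : K)⁻¹ • 𝟙)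
    {X : Matrix ι ι K} (hXr : X *ᵥ 1 = 1) (hXc : Xᵀ *ᵥ 1 = 1) :
    X = (Fintype.card ι : K)⁻¹ • 𝟙 + V * (Vᵀ * X * V) * Vᵀ := by
  have hXJ : X * 𝟙 = 𝟙 := by rw [mul_vecMulVec, hXr]
  have hJX : 𝟙 * X = 𝟙 := by rw [vecMulVec_mul, ← mulVec_transpose, hXc]
  have hconj : V * (Vᵀ * X * V) * Vᵀ = (V * Vᵀ) * X * (V * Vᵀ) := by
    simp only [Matrix.mul_assoc]
  rw [hconj, hV]
  simp only [Matrix.sub_mul, Matrix.mul_sub, Matrix.one_mul, Matrix.mul_one, Matrix.smul_mul,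
    Matrix.mul_smul, hXJ, hJX, vecMulVec_one_one_mul_self, smul_smul, inv_mul_cancel₀ hn]
  module

end Field

section Real

variable [DecidableEq ι] [DecidableEq κ]

local notation "𝟙" => vecMulVec (1 : ι → ℝ) (1 : ι → ℝ)

theorem mul_transpose_eq_one_sub_smul_vecMulVec_one_one {V : Matrix ι κ ℝ} (hVV : Vᵀ * V = 1)
    (hVe : Vᵀ *ᵥ 1 = 0) (hcard : Fintype.card κ + 1 = Fintype.card ι) :
    V * Vᵀ = 1 - (Fintype.card ι : ℝ)⁻¹ • 𝟙 := by
  have hn : (Fintype.card ι : ℝ) ≠ 0 := Nat.cast_ne_zero.mpr (by omega)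
  have hVJ : Vᵀ * 𝟙 = 0 := by rw [mul_vecMulVec, hVe, zero_vecMulVec]
  have hJV : 𝟙 * V = 0 := by
    rw [← transpose_transpose (𝟙 * V), transpose_mul, transpose_vecMulVec, hVJ, transpose_zero]
  have hQQ : V * Vᵀ * (V * Vᵀ) = V * Vᵀ := by
    rw [Matrix.mul_assoc, ← Matrix.mul_assoc Vᵀ, hVV, Matrix.one_mul]
  have hQJ : V * Vᵀ * 𝟙 = 0 := by rw [Matrix.mul_assoc, hVJ, Matrix.mul_zero]
  have hJQ : 𝟙 * (V * Vᵀ) = 0 := by rw [← Matrix.mul_assoc, hJV, Matrix.zero_mul]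
  rw [eq_comm, ← sub_eq_zero]
  refine eq_zero_of_isHermitian_of_isIdempotentElem_of_trace_eq_zero ?_ ?_ ?_
  · simp only [isHermitian_iff_isSymm, IsSymm, transpose_sub, transpose_one, transpose_smul,
      transpose_vecMulVec, transpose_mul, transpose_transpose]
  · rw [IsIdempotentElem]
    simp only [sub_mul, mul_sub, one_mul, mul_one, Matrix.smul_mul, Matrix.mul_smul,
      vecMulVec_one_one_mul_self, hQQ, hQJ, hJQ, smul_smul, smul_zero, inv_mul_cancel₀ hn]
    module
  · rw [trace_sub, trace_sub, trace_smul, trace_vecMulVec, one_dotProduct_one, trace_one,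
      trace_mul_comm, hVV, trace_one, smul_eq_mul, inv_mul_cancel₀ hn, ← hcard]
    push_cast
    ring

end Real

end Matrix

theorem trace_decomposition_general (n : ℕ) (hn : 0 < n)
    (V : Matrix (Fin n) (Fin (n - 1)) ℝ)
    (hVV : Vᵀ * V = 1) (hVe : Vᵀ *ᵥ (fun _ => (1 : ℝ)) = 0)
    (X : Matrix (Fin n) (Fin n) ℝ) (hXr : X *ᵥ (fun _ => (1 : ℝ)) = fun _ => 1)
    (hXc : Xᵀ *ᵥ (fun _ => (1 : ℝ)) = fun _ => 1)
    (A B : Matrix (Fin n) (Fin n) ℝ) (hA : A.IsSymm) (hB : B.IsSymm) :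
    Matrix.trace (A * X * B * Xᵀ) =
      Matrix.trace ((Vᵀ * A * V) * (Vᵀ * X * V) * (Vᵀ * B * V) * (Vᵀ * X * V)ᵀ)
      + 2 / (n : ℝ) *
        Matrix.trace (B * (Matrix.of fun _ _ => (1 : ℝ)) * A * V * (Vᵀ * X * V) * Vᵀ)
      + 1 / (n : ℝ) ^ 2 * ((fun _ => (1 : ℝ)) ⬝ᵥ (A *ᵥ fun _ => (1 : ℝ)))
        * ((fun _ => (1 : ℝ)) ⬝ᵥ (B *ᵥ fun _ => (1 : ℝ))) := by
  have hJ : (Matrix.of fun _ _ => (1 : ℝ) : Matrix (Fin n) (Fin n) ℝ) = vecMulVec 1 1 := by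
    ext; simp [vecMulVec_apply]
  have hJ_symm : (vecMulVec (1 : Fin n → ℝ) 1).IsSymm := transpose_vecMulVec _ _
  have hV := mul_transpose_eq_one_sub_smul_vecMulVec_one_one hVV hVe
    (by simp only [Fintype.card_fin]; omega)
  have hX := eq_smul_vecMulVec_one_one_add_conj_of_mul_transpose_eq (by simp [hn.ne']) hV hXr hXc
  rw [Fintype.card_fin] at hX
  rw [hJ, ← Pi.one_def]
  conv_lhs => rw [hX]
  simp only [Matrix.mul_add, Matrix.add_mul, transpose_add, transpose_smul, Matrix.mul_smul,
    Matrix.smul_mul, trace_add, trace_smul, smul_eq_mul, hJ_symm.eq,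
    trace_mul_conj_mul_transpose_conj, trace_mul_mul_mul_transpose_of_isSymm hA hB hJ_symm,
    trace_mul_vecMulVec_one_one_mul_vecMulVec_one_one]
  rw [Matrix.mul_assoc (A * _) B, trace_mul_comm (A * _) (B * _)]
  simp only [Matrix.mul_assoc]
  ring

/-- For a doubly stochastic `X` and symmetric `A, B`, with `Y = Vᵀ X V`:
`tr(A X B Xᵀ) = tr(Ã Y B̃ Yᵀ) + (2/n) tr(B J A V Y Vᵀ) + (1/n²)(eᵀAe)(eᵀBe)`. -/
theorem trace_decomposition (n : ℕ) (hn : 0 < n)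
    (V : Matrix (Fin n) (Fin (n - 1)) ℝ)
    (hVV : Vᵀ * V = 1) (hVe : Vᵀ *ᵥ (fun _ => (1 : ℝ)) = 0)
    (X : Matrix (Fin n) (Fin n) ℝ) (hX0 : ∀ i j, 0 ≤ X i j)
    (hXr : X *ᵥ (fun _ => (1 : ℝ)) = fun _ => 1)
    (hXc : Xᵀ *ᵥ (fun _ => (1 : ℝ)) = fun _ => 1)
    (A B : Matrix (Fin n) (Fin n) ℝ) (hA : A.IsSymm) (hB : B.IsSymm) :
    Matrix.trace (A * X * B * Xᵀ) =
      Matrix.trace ((Vᵀ * A * V) * (Vᵀ * X * V) * (Vᵀ * B * V) * (Vᵀ * X * V)ᵀ)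
      + 2 / (n : ℝ) *
        Matrix.trace (B * (Matrix.of fun _ _ => (1 : ℝ)) * A * V * (Vᵀ * X * V) * Vᵀ)
      + 1 / (n : ℝ) ^ 2 * ((fun _ => (1 : ℝ)) ⬝ᵥ (A *ᵥ fun _ => (1 : ℝ)))
        * ((fun _ => (1 : ℝ)) ⬝ᵥ (B *ᵥ fun _ => (1 : ℝ))) :=
  trace_decomposition_general n hn V hVV hVe X hXr hXc A B hA hB
end

section
/- Let V be an n×(n−1) matrix with orthonormal columns spanning e^⊥. Then for any vector y ∈ ℝ^{(n−1)²} with (V ⊗ V)y ≥ −(1/n)(e ⊗ e) entrywise, the matrix X = (1/n)ee^T + VYV^T (where vec(Y) = y) is doubly stochastic, i.e., X ≥ 0 entrywise and Xe = X^T e = e. -/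
/-!
Since `Vᵀ e = 0`, the matrix `V Y Vᵀ` has zero row and column sums, so adding `(1/n) e eᵀ` makes
them all equal to one. Moreover `(V ⊗ V) vec Y = vec (V Y Vᵀ)`, so the hypothesis on `y` says
exactly that every entry of `V Y Vᵀ` is at least `-1/n`, i.e. that `X ≥ 0`.
-/

open Matrix Kronecker

namespace Matrix

variable {ι m m' R : Type*}

theorem transpose_mul_mul_transpose {n : Type*} [Fintype m] [Fintype m'] [CommSemiring R]
    (A : Matrix ι m R) (Y : Matrix m m' R) (B : Matrix n m' R) :
    (A * Y * Bᵀ)ᵀ = B * Yᵀ * Aᵀ := by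
  rw [transpose_mul, transpose_mul, transpose_transpose, Matrix.mul_assoc]

theorem kronecker_mulVec_uncurry_apply [Fintype m] [Fintype m'] [CommSemiring R]
    (A : Matrix ι m R) (Y : Matrix m m' R) (B : Matrix ι m' R) (i j : ι) :
    ((A ⊗ₖ B) *ᵥ Function.uncurry Y) (i, j) = (A * Y * Bᵀ) i j := by
  rw [show Function.uncurry Y = vec Yᵀ from rfl, kronecker_mulVec_vec]
  simpa using congr_fun₂ (transpose_mul_mul_transpose B Yᵀ A) i j

theorem mul_mul_transpose_mulVec_eq_zero [Fintype ι] [Fintype m] [NonUnitalSemiring R]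
    (V : Matrix ι m R) (Y : Matrix m m R) {v : ι → R} (hV : Vᵀ *ᵥ v = 0) :
    (V * Y * Vᵀ) *ᵥ v = 0 := by
  rw [← mulVec_mulVec, hV, mulVec_zero]

theorem inv_card_smul_of_one_add_mulVec_one [Fintype ι] [DivisionSemiring R] [CharZero R]
    {A : Matrix ι ι R} (hA : A *ᵥ (fun _ => 1) = 0) :
    ((Fintype.card ι : R)⁻¹ • of (fun _ _ => 1) + A) *ᵥ (fun _ => 1) = fun _ => 1 := by
  rcases isEmpty_or_nonempty ι with hι | hι
  · exact Subsingleton.elim _ _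
  rw [add_mulVec, hA, add_zero, smul_mulVec]
  ext i
  simp [mulVec, dotProduct]

end Matrix

theorem x_doubly_stochastic_general (n : ℕ)
    (V : Matrix (Fin n) (Fin (n - 1)) ℝ)
    (hVe : Vᵀ *ᵥ (fun _ => (1 : ℝ)) = 0)
    (y : Fin (n - 1) × Fin (n - 1) → ℝ)
    (Y : Matrix (Fin (n - 1)) (Fin (n - 1)) ℝ) (hY : ∀ p, y p = Y p.1 p.2)
    (hq : ∀ p : Fin n × Fin n, -(1 / (n : ℝ)) ≤ ((V ⊗ₖ V) *ᵥ y) p) :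
    (∀ i j, 0 ≤ (((n : ℝ)⁻¹ • (Matrix.of fun _ _ => (1 : ℝ)) + V * Y * Vᵀ :
        Matrix (Fin n) (Fin n) ℝ)) i j) ∧
    (((n : ℝ)⁻¹ • (Matrix.of fun _ _ => (1 : ℝ)) + V * Y * Vᵀ) *ᵥ (fun _ => (1 : ℝ))
      = fun _ => 1) ∧
    (((n : ℝ)⁻¹ • (Matrix.of fun _ _ => (1 : ℝ)) + V * Y * Vᵀ)ᵀ *ᵥ (fun _ => (1 : ℝ))
      = fun _ => 1) := by
  obtain rfl : y = Function.uncurry Y := funext hY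
  have hJ : (of fun _ _ => (1 : ℝ) : Matrix (Fin n) (Fin n) ℝ)ᵀ = of fun _ _ => 1 := rfl
  refine ⟨fun i j => ?_, ?_, ?_⟩
  · have := hq (i, j)
    rw [kronecker_mulVec_uncurry_apply, one_div] at this
    simp only [Matrix.add_apply, Matrix.smul_apply, of_apply, smul_eq_mul, mul_one]
    linarith
  · simpa only [Fintype.card_fin] using
      inv_card_smul_of_one_add_mulVec_one (mul_mul_transpose_mulVec_eq_zero V Y hVe)
  · rw [transpose_add, transpose_smul, hJ, transpose_mul_mul_transpose]
    simpa only [Fintype.card_fin] using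
      inv_card_smul_of_one_add_mulVec_one (mul_mul_transpose_mulVec_eq_zero V Yᵀ hVe)

/-- If `(V ⊗ V) y ≥ -(1/n) e ⊗ e` entrywise, then `X = (1/n) e eᵀ + V Y Vᵀ`
(with `vec Y = y`) is doubly stochastic. -/
theorem x_doubly_stochastic (n : ℕ) (hn : 0 < n)
    (V : Matrix (Fin n) (Fin (n - 1)) ℝ)
    (hVV : Vᵀ * V = 1) (hVe : Vᵀ *ᵥ (fun _ => (1 : ℝ)) = 0)
    (y : Fin (n - 1) × Fin (n - 1) → ℝ)
    (Y : Matrix (Fin (n - 1)) (Fin (n - 1)) ℝ) (hY : ∀ p, y p = Y p.1 p.2)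
    (hq : ∀ p : Fin n × Fin n, -(1 / (n : ℝ)) ≤ ((V ⊗ₖ V) *ᵥ y) p) :
    (∀ i j, 0 ≤ (((n : ℝ)⁻¹ • (Matrix.of fun _ _ => (1 : ℝ)) + V * Y * Vᵀ :
        Matrix (Fin n) (Fin n) ℝ)) i j) ∧
    (((n : ℝ)⁻¹ • (Matrix.of fun _ _ => (1 : ℝ)) + V * Y * Vᵀ) *ᵥ (fun _ => (1 : ℝ))
      = fun _ => 1) ∧
    (((n : ℝ)⁻¹ • (Matrix.of fun _ _ => (1 : ℝ)) + V * Y * Vᵀ)ᵀ *ᵥ (fun _ => (1 : ℝ))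
      = fun _ => 1) :=
  x_doubly_stochastic_general n V hVe y Y hY hq
end

section
/- Let V be an n×(n−1) matrix with orthonormal columns spanning e^⊥ and let Y ∈ 𝕊^{n²}_+ with nonnegative entries be feasible for the Povh–Rendl SDP relaxation (satisfying the constraints of Lemma 6 of Povh–Rendl). Set U = (V^T ⊗ V^T) Y (V ⊗ V). Then ⟨E_{ij} ⊗ I_{n−1}, U⟩ = δ_{ij} and ⟨I_{n−1} ⊗ E_{ij}, U⟩ = δ_{ij} for all 1 ≤ i,j ≤ n−1. -/
open Matrix Kronecker

/-!
Moving the conjugation by `V ⊗ V` onto the other factor turns both pairings into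
`⟨A ⊗ VVᵀ, Y⟩` and `⟨VVᵀ ⊗ A, Y⟩` with `A = V E_{ij} Vᵀ`. Since the columns of `V` are an
orthonormal basis of `e^⊥`, `VVᵀ = I - J/n`. Against `Y`, the `I`-part picks out the diagonal
blocks (the off-diagonal entries there vanish by the gangster constraint and nonnegativity),
giving `tr A = tr E_{ij} = δ_{ij}`, while the `J`-part sums whole blocks of `Y` to `1`, giving
`eᵀ A e / n = 0`.
-/

namespace Matrix

variable {m n k l : Type*} [Fintype m] [Fintype n] [Fintype k] [Fintype l]

theorem IsHermitian.eq_zero_of_isIdempotentElem_of_trace_eq_zero {R : Type*} [Ring R]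
    [PartialOrder R] [StarRing R] [StarOrderedRing R] [NoZeroDivisors R] {A : Matrix m m R}
    (hA : A.IsHermitian) (hAA : IsIdempotentElem A) (htr : A.trace = 0) : A = 0 := by
  rwa [← trace_conjTranspose_mul_self_eq_zero_iff, hA.eq, hAA.eq]

theorem sum_sum_mul_mul_transpose_eq_zero {R : Type*} [CommRing R] {V : Matrix m k R}
    (hV : Vᵀ *ᵥ 1 = 0) (M : Matrix k k R) : ∑ p, ∑ r, (V * M * Vᵀ) p r = 0 := by
  have h : (V * M * Vᵀ) *ᵥ 1 = 0 := by rw [← mulVec_mulVec, hV, mulVec_zero]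
  simpa [mulVec, dotProduct] using congrArg (fun v => ∑ p, v p) h

theorem mul_transpose_eq_one_sub_of_transpose_mul_eq_one [DecidableEq m] [DecidableEq k]
    {V : Matrix m k ℝ} (hVV : Vᵀ * V = 1) (hV : Vᵀ *ᵥ 1 = 0)
    (hcard : Fintype.card k + 1 = Fintype.card m) :
    V * Vᵀ = 1 - (Fintype.card m : ℝ)⁻¹ • of fun _ _ => 1 := by
  set c : ℝ := (Fintype.card m : ℝ)⁻¹
  set J : Matrix m m ℝ := of fun _ _ => 1
  have hc : c * Fintype.card m = 1 := inv_mul_cancel₀ (by norm_cast; omega)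
  have hVJ : Vᵀ * J = 0 := by
    ext a b
    simpa [J, mul_apply, mulVec, dotProduct] using congrFun hV a
  have hJV : J * V = 0 := by
    simpa [transpose_mul, show Jᵀ = J from rfl] using congrArg transpose hVJ
  have hJJ : J * J = (Fintype.card m : ℝ) • J := by
    ext; simp [J, mul_apply]
  have hVV' : V * Vᵀ * (V * Vᵀ) = V * Vᵀ := by
    rw [Matrix.mul_assoc, ← Matrix.mul_assoc Vᵀ, hVV, Matrix.one_mul]
  have hVVJ : V * Vᵀ * J = 0 := by rw [Matrix.mul_assoc, hVJ, Matrix.mul_zero]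
  have hJVV : J * (V * Vᵀ) = 0 := by rw [← Matrix.mul_assoc, hJV, Matrix.zero_mul]
  set P := V * Vᵀ + c • J
  have hPP : IsIdempotentElem P := by
    simp only [IsIdempotentElem, P, add_mul, mul_add, Matrix.mul_smul, Matrix.smul_mul, hVV',
      hVVJ, hJVV, hJJ, smul_smul, smul_zero, add_zero, zero_add, hc, mul_one]
  have htrP : trace P = Fintype.card m := by
    have htrV : trace (V * Vᵀ) = Fintype.card k := by rw [trace_mul_comm, hVV, trace_one]
    have htrJ : trace (c • J) = 1 := by simpa [J, trace, mul_comm] using hc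
    rw [trace_add, htrV, htrJ, ← hcard]
    push_cast
    rfl
  have hR : 1 - P = 0 := by
    refine IsHermitian.eq_zero_of_isIdempotentElem_of_trace_eq_zero ?_ hPP.one_sub ?_
    · simp [IsHermitian, P, conjTranspose_eq_transpose_of_trivial, show Jᵀ = J from rfl]
    · rw [trace_sub, trace_one, htrP, sub_self]
  rw [sub_eq_zero] at hR
  rw [hR, add_sub_cancel_right]

theorem trace_transpose_mul_eq_sum {R : Type*} [CommRing R] (A B : Matrix m n R) :
    trace (Aᵀ * B) = ∑ i, ∑ j, A i j * B i j := by
  rw [trace_mul_comm]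
  exact Finset.sum_congr rfl fun i _ => Finset.sum_congr rfl fun j _ => mul_comm _ _

theorem mul_apply_eq_zero_of_trace_transpose_mul_eq_zero {R : Type*} [CommRing R]
    [PartialOrder R] [IsOrderedRing R] {C Y : Matrix m n R} (hC : ∀ i j, 0 ≤ C i j)
    (hY : ∀ i j, 0 ≤ Y i j) (h : trace (Cᵀ * Y) = 0) (i : m) (j : n) : C i j * Y i j = 0 := by
  rw [trace_transpose_mul_eq_sum] at h
  have hnn : ∀ i j, 0 ≤ C i j * Y i j := fun i j => mul_nonneg (hC i j) (hY i j)
  have hrow := (Finset.sum_eq_zero_iff_of_nonneg fun i _ =>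
    Finset.sum_nonneg fun j _ => hnn i j).mp h i (Finset.mem_univ _)
  exact (Finset.sum_eq_zero_iff_of_nonneg fun j _ => hnn i j).mp hrow j (Finset.mem_univ _)

theorem trace_kronecker_transpose_mul_eq_sum {R : Type*} [CommRing R] (A : Matrix m m R)
    (B : Matrix n n R) (Y : Matrix (m × n) (m × n) R) :
    trace ((A ⊗ₖ B)ᵀ * Y) = ∑ p, ∑ r, ∑ q, ∑ s, A p r * B q s * Y (p, q) (r, s) := by
  simp only [trace_transpose_mul_eq_sum, Fintype.sum_prod_type, kroneckerMap_apply]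
  exact Finset.sum_congr rfl fun p _ => Finset.sum_comm

theorem trace_kronecker_transpose_mul_submatrix_swap {R : Type*} [CommRing R]
    (A : Matrix m m R) (B : Matrix n n R) (Y : Matrix (m × n) (m × n) R) :
    trace ((B ⊗ₖ A)ᵀ * Y.submatrix Prod.swap Prod.swap) = trace ((A ⊗ₖ B)ᵀ * Y) := by
  rw [trace_transpose_mul_eq_sum, trace_transpose_mul_eq_sum]
  refine Fintype.sum_equiv (.prodComm _ _) _ _ fun x =>
    Fintype.sum_equiv (.prodComm _ _) _ _ fun y => ?_
  simp only [kroneckerMap_apply, submatrix_apply, Equiv.prodComm_apply, Prod.fst_swap,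
    Prod.snd_swap, mul_comm (B _ _)]

theorem trace_kronecker_transpose_mul_conj {R : Type*} [CommRing R] (M : Matrix k k R)
    (N : Matrix l l R) (V : Matrix m k R) (W : Matrix n l R) (Y : Matrix (m × n) (m × n) R) :
    trace ((M ⊗ₖ N)ᵀ * ((Vᵀ ⊗ₖ Wᵀ) * Y * (V ⊗ₖ W))) =
      trace (((V * M * Vᵀ) ⊗ₖ (W * N * Wᵀ))ᵀ * Y) := by
  rw [← Matrix.mul_assoc, trace_mul_comm, ← Matrix.mul_assoc, ← Matrix.mul_assoc,
    ← kroneckerMap_transpose, ← kroneckerMap_transpose, ← mul_kronecker_mul,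
    ← mul_kronecker_mul]
  simp only [transpose_mul, transpose_transpose, Matrix.mul_assoc]

variable [DecidableEq m] [DecidableEq n] {R : Type*} [CommRing R] {Y : Matrix (m × n) (m × n) R}

theorem apply_eq_zero_of_trace_gangster_eq_zero [PartialOrder R] [IsOrderedRing R]
    (hY : ∀ x y, 0 ≤ Y x y)
    (h : trace (((1 : Matrix m m R) ⊗ₖ ((of fun _ _ => (1 : R)) - 1)
      + ((of fun _ _ => (1 : R)) - 1) ⊗ₖ (1 : Matrix n n R))ᵀ * Y) = 0) :
    (∀ p q s, q ≠ s → Y (p, q) (p, s) = 0) ∧ (∀ p r q, p ≠ r → Y (p, q) (r, q) = 0) := by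
  set C : Matrix (m × n) (m × n) R := (1 : Matrix m m R) ⊗ₖ ((of fun _ _ => (1 : R)) - 1)
      + ((of fun _ _ => (1 : R)) - 1) ⊗ₖ (1 : Matrix n n R)
  have hC : ∀ p q r s, C (p, q) (r, s) =
      (if p = r then 1 else 0) * (1 - if q = s then 1 else 0)
        + (1 - if p = r then 1 else 0) * (if q = s then 1 else 0) := by
    intro p q r s
    simp [C, one_apply]
  have key := mul_apply_eq_zero_of_trace_transpose_mul_eq_zero
    (fun x y => by rw [hC]; split_ifs <;> norm_num) hY h
  constructor
  · intro p q s hqs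
    simpa [hC, hqs] using key (p, q) (p, s)
  · intro p r q hpr
    simpa [hC, hpr] using key (p, q) (r, q)

theorem sum_apply_eq_ite_of_trace_gangster_eq_zero [PartialOrder R] [IsOrderedRing R]
    (hY : ∀ x y, 0 ≤ Y x y)
    (h : trace (((1 : Matrix m m R) ⊗ₖ ((of fun _ _ => (1 : R)) - 1)
      + ((of fun _ _ => (1 : R)) - 1) ⊗ₖ (1 : Matrix n n R))ᵀ * Y) = 0)
    (hleft : ∀ p, ∑ q, Y (p, q) (p, q) = 1) (hright : ∀ q, ∑ p, Y (p, q) (p, q) = 1) :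
    (∀ p r, ∑ q, Y (p, q) (r, q) = if p = r then 1 else 0) ∧
      (∀ q s, ∑ p, Y (p, q) (p, s) = if q = s then 1 else 0) := by
  obtain ⟨hzero_right, hzero_left⟩ := apply_eq_zero_of_trace_gangster_eq_zero hY h
  constructor
  · intro p r
    split_ifs with hpr
    · exact hpr ▸ hleft p
    · exact Finset.sum_eq_zero fun q _ => hzero_left p r q hpr
  · intro q s
    split_ifs with hqs
    · exact hqs ▸ hright q
    · exact Finset.sum_eq_zero fun p _ => hzero_right p q s hqs

theorem trace_kronecker_one_sub_smul_transpose_mul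
    (hdiag : ∀ p r, ∑ q, Y (p, q) (r, q) = if p = r then 1 else 0)
    (hblock : ∀ p r, ∑ q, ∑ s, Y (p, q) (r, s) = 1) (A : Matrix m m R) (c : R) :
    trace ((A ⊗ₖ (1 - c • of fun _ _ => 1))ᵀ * Y) = trace A - c * ∑ p, ∑ r, A p r := by
  have h : ∀ p r, ∑ q, ∑ s, A p r * (1 - c • of fun _ _ => (1 : R)) q s * Y (p, q) (r, s)
      = A p r * ((if p = r then 1 else 0) - c) := by
    intro p r
    calc _ = A p r * (∑ q, Y (p, q) (r, q) - c * ∑ q, ∑ s, Y (p, q) (r, s)) := by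
          simp [sub_mul, one_apply, Finset.mul_sum, mul_sub, Finset.sum_sub_distrib, mul_assoc]
      _ = _ := by rw [hdiag, hblock, mul_one]
  simp only [trace_kronecker_transpose_mul_eq_sum, h, mul_sub, mul_ite, mul_one, mul_zero,
    Finset.sum_sub_distrib, Finset.sum_ite_eq, Finset.mem_univ, if_true, Finset.mul_sum]
  simp [trace, mul_comm]

theorem trace_one_sub_smul_kronecker_transpose_mul
    (hdiag : ∀ q s, ∑ p, Y (p, q) (p, s) = if q = s then 1 else 0)
    (hblock : ∀ q s, ∑ p, ∑ r, Y (p, q) (r, s) = 1) (A : Matrix n n R) (c : R) :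
    trace (((1 - c • of fun _ _ => 1) ⊗ₖ A)ᵀ * Y) = trace A - c * ∑ q, ∑ s, A q s := by
  rw [← trace_kronecker_transpose_mul_submatrix_swap]
  exact trace_kronecker_one_sub_smul_transpose_mul hdiag hblock A c

end Matrix

theorem projected_U_constraints_general (n : ℕ)
    (V : Matrix (Fin n) (Fin (n - 1)) ℝ)
    (hVV : Vᵀ * V = 1) (hVe : Vᵀ *ᵥ (fun _ => (1 : ℝ)) = 0)
    (Y : Matrix (Fin n × Fin n) (Fin n × Fin n) ℝ)
    (hnn : ∀ p q, 0 ≤ Y p q)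
    (h1 : Matrix.trace
      ((((1 : Matrix (Fin n) (Fin n) ℝ) ⊗ₖ ((Matrix.of fun _ _ => (1 : ℝ)) - 1))
        + (((Matrix.of fun _ _ => (1 : ℝ)) - 1) ⊗ₖ (1 : Matrix (Fin n) (Fin n) ℝ)))ᵀ * Y)
      = 0)
    (h2 : ∀ i, ∑ r, Y (i, r) (i, r) = 1)
    (h2' : ∀ r, ∑ i, Y (i, r) (i, r) = 1)
    (h3 : ∀ i j r, ∑ s, Y (i, r) (j, s) = Y (j, r) (j, r))
    (h4 : ∀ j r s, ∑ i, Y (i, r) (j, s) = Y (j, s) (j, s)) :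
    ∀ i j : Fin (n - 1),
      Matrix.trace
        ((Matrix.single i j (1 : ℝ) ⊗ₖ (1 : Matrix (Fin (n - 1)) (Fin (n - 1)) ℝ))ᵀ
          * ((Vᵀ ⊗ₖ Vᵀ) * Y * (V ⊗ₖ V))) = (if i = j then 1 else 0) ∧
      Matrix.trace
        (((1 : Matrix (Fin (n - 1)) (Fin (n - 1)) ℝ) ⊗ₖ Matrix.single i j (1 : ℝ))ᵀ
          * ((Vᵀ ⊗ₖ Vᵀ) * Y * (V ⊗ₖ V))) = (if i = j then 1 else 0) := by
  intro i j
  obtain ⟨hdiag, hdiag'⟩ := sum_apply_eq_ite_of_trace_gangster_eq_zero hnn h1 h2 h2'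
  have hblock : ∀ p r, ∑ q, ∑ s, Y (p, q) (r, s) = 1 := fun p r => by
    simp_rw [h3]; exact h2 r
  have hblock' : ∀ q s, ∑ p, ∑ r, Y (p, q) (r, s) = 1 := fun q s => by
    rw [Finset.sum_comm]; simp_rw [h4]; exact h2' s
  have hP := mul_transpose_eq_one_sub_of_transpose_mul_eq_one hVV hVe
    (by simp only [Fintype.card_fin]; have := i.pos; omega)
  have htr : trace (V * single i j (1 : ℝ) * Vᵀ) = if i = j then 1 else 0 := by
    rw [trace_mul_cycle, hVV, Matrix.one_mul]
    split_ifs with hij <;> simp [hij]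
  have hsum := sum_sum_mul_mul_transpose_eq_zero hVe (single i j (1 : ℝ))
  constructor
  · rw [trace_kronecker_transpose_mul_conj, Matrix.mul_one, hP,
      trace_kronecker_one_sub_smul_transpose_mul hdiag hblock, htr, hsum, mul_zero, sub_zero]
  · rw [trace_kronecker_transpose_mul_conj, Matrix.mul_one, hP,
      trace_one_sub_smul_kronecker_transpose_mul hdiag' hblock', htr, hsum, mul_zero, sub_zero]

/-- For `Y` feasible for the Povh–Rendl SDP relaxation and
`U = (Vᵀ ⊗ Vᵀ) Y (V ⊗ V)`, we have `⟨E_{ij} ⊗ I, U⟩ = δ_{ij}` and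
`⟨I ⊗ E_{ij}, U⟩ = δ_{ij}`. -/
theorem projected_U_constraints (n : ℕ)
    (V : Matrix (Fin n) (Fin (n - 1)) ℝ)
    (hVV : Vᵀ * V = 1) (hVe : Vᵀ *ᵥ (fun _ => (1 : ℝ)) = 0)
    (Y : Matrix (Fin n × Fin n) (Fin n × Fin n) ℝ)
    (hpsd : Y.PosSemidef) (hnn : ∀ p q, 0 ≤ Y p q)
    (h1 : Matrix.trace
      ((((1 : Matrix (Fin n) (Fin n) ℝ) ⊗ₖ ((Matrix.of fun _ _ => (1 : ℝ)) - 1))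
        + (((Matrix.of fun _ _ => (1 : ℝ)) - 1) ⊗ₖ (1 : Matrix (Fin n) (Fin n) ℝ)))ᵀ * Y)
      = 0)
    (h2 : ∀ i, ∑ r, Y (i, r) (i, r) = 1)
    (h2' : ∀ r, ∑ i, Y (i, r) (i, r) = 1)
    (h3 : ∀ i j r, ∑ s, Y (i, r) (j, s) = Y (j, r) (j, r))
    (h4 : ∀ j r s, ∑ i, Y (i, r) (j, s) = Y (j, s) (j, s)) :
    ∀ i j : Fin (n - 1),
      Matrix.trace
        ((Matrix.single i j (1 : ℝ) ⊗ₖ (1 : Matrix (Fin (n - 1)) (Fin (n - 1)) ℝ))ᵀ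
          * ((Vᵀ ⊗ₖ Vᵀ) * Y * (V ⊗ₖ V))) = (if i = j then 1 else 0) ∧
      Matrix.trace
        (((1 : Matrix (Fin (n - 1)) (Fin (n - 1)) ℝ) ⊗ₖ Matrix.single i j (1 : ℝ))ᵀ
          * ((Vᵀ ⊗ₖ Vᵀ) * Y * (V ⊗ₖ V))) = (if i = j then 1 else 0) :=
  projected_U_constraints_general n V hVV hVe Y hnn h1 h2 h2' h3 h4
end

section
/- Let X_0 = vec(I_n)vec(I_n)^T and let ℒ^⊥ be the span of the constraint matrices {I_n ⊗ E_{jj} : j ∈ [n]} ∪ {E_{jj} ⊗ I_n : j ∈ [n]} ∪ {T, J_{n²}}, where T = I_n ⊗ (J_n − I_n) + (J_n − I_n) ⊗ I_n. Then the orthogonal projection of X_0 onto ℒ^⊥ equals (1/(n²−n))(J_{n²} − I_{n²} − T) + (1/n) I_{n²}. -/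
open Matrix Kronecker

/-- The all-allOnes matrix `J_{n²}`. -/
def bigJ (n : ℕ) : Matrix (Fin n × Fin n) (Fin n × Fin n) ℝ :=
  Matrix.of fun _ _ => 1

/-- The constraint matrix `T = I ⊗ (J - I) + (J - I) ⊗ I`. -/
def bigT (n : ℕ) : Matrix (Fin n × Fin n) (Fin n × Fin n) ℝ :=
  (1 : Matrix (Fin n) (Fin n) ℝ) ⊗ₖ ((Matrix.of fun _ _ => (1 : ℝ)) - 1)
    + ((Matrix.of fun _ _ => (1 : ℝ)) - 1) ⊗ₖ (1 : Matrix (Fin n) (Fin n) ℝ)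

/-- `X₀ = vec(I_n) vec(I_n)ᵀ`. -/
def bigX0 (n : ℕ) : Matrix (Fin n × Fin n) (Fin n × Fin n) ℝ :=
  Matrix.vecMulVec (fun p => if p.1 = p.2 then 1 else 0)
    (fun p => if p.1 = p.2 then 1 else 0)

/-- `ℒ^⊥`: the span of the constraint matrices. -/
def Lperp (n : ℕ) : Submodule ℝ (Matrix (Fin n × Fin n) (Fin n × Fin n) ℝ) :=
  Submodule.span ℝ
    ({M | ∃ j : Fin n,
        M = (1 : Matrix (Fin n) (Fin n) ℝ) ⊗ₖ Matrix.single j j (1 : ℝ)} ∪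
     {M | ∃ j : Fin n,
        M = Matrix.single j j (1 : ℝ) ⊗ₖ (1 : Matrix (Fin n) (Fin n) ℝ)} ∪
     {bigT n, bigJ n})

/-!
Write `K = J_n - I_n`. Then `T = I ⊗ K + K ⊗ I`, `J_{n²} - I - T = K ⊗ K` and `I_{n²} = I ⊗ I`,
so every matrix in sight is a Kronecker product (or a sum of two). The trace inner product
factorises over Kronecker products, `⟨A ⊗ B, C ⊗ D⟩ = ⟨A, C⟩⟨B, D⟩`, and
`⟨vec(I) vec(I)ᵀ, A ⊗ B⟩ = ⟨A, B⟩`. Hence the residual pairs with `A ⊗ B` to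
`⟨A, B⟩ - ⟨K, A⟩⟨K, B⟩ / (n² - n) - tr A tr B / n`, which vanishes on each generator of `ℒ^⊥`
since `tr K = 0`, `tr E_jj = 1`, `tr J_n = n`, `⟨K, J_n⟩ = n² - n` and `⟨J_n, J_n⟩ = n²`.
-/

section Frobenius

variable {R m k : Type*} [CommSemiring R] [Fintype m] [Fintype k]

theorem trace_transpose_mul_eq_zero_of_mem_span {A : Matrix m k R} {s : Set (Matrix m k R)}
    (hs : ∀ M ∈ s, trace (Aᵀ * M) = 0) {M : Matrix m k R} (hM : M ∈ Submodule.span R s) :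
    trace (Aᵀ * M) = 0 := by
  induction hM using Submodule.span_induction with
  | mem x hx => exact hs x hx
  | zero => simp
  | add x y _ _ hx hy => rw [Matrix.mul_add, trace_add, hx, hy, add_zero]
  | smul c x _ hx => rw [Matrix.mul_smul, trace_smul, hx, smul_zero]

theorem trace_transpose_kronecker_mul_kronecker {l n : Type*} [Fintype l] [Fintype n]
    (A C : Matrix m k R) (B D : Matrix l n R) :
    trace ((A ⊗ₖ B)ᵀ * (C ⊗ₖ D)) = trace (Aᵀ * C) * trace (Bᵀ * D) := by
  rw [← kroneckerMap_transpose, ← mul_kronecker_mul, trace_kronecker]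

end Frobenius

abbrev allOnes (n : ℕ) : Matrix (Fin n) (Fin n) ℝ := Matrix.of fun _ _ => 1

theorem bigJ_eq_allOnes_kronecker_allOnes (n : ℕ) : bigJ n = allOnes n ⊗ₖ allOnes n := by
  ext; simp [bigJ]

theorem bigT_eq_kronecker (n : ℕ) : bigT n = 1 ⊗ₖ (allOnes n - 1) + (allOnes n - 1) ⊗ₖ 1 := rfl

theorem bigJ_sub_one_sub_bigT (n : ℕ) :
    bigJ n - 1 - bigT n = (allOnes n - 1) ⊗ₖ (allOnes n - 1) := by
  ext ⟨a, b⟩ ⟨c, d⟩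
  by_cases hac : a = c <;> by_cases hbd : b = d <;> simp [bigJ, bigT, one_apply, hac, hbd]

theorem trace_bigX0_transpose_mul_kronecker (n : ℕ) (A B : Matrix (Fin n) (Fin n) ℝ) :
    trace ((bigX0 n)ᵀ * (A ⊗ₖ B)) = trace (Aᵀ * B) := by
  simp [bigX0, trace, mul_apply, vecMulVec_apply, Fintype.sum_prod_type]

theorem trace_allOnes (n : ℕ) : trace (allOnes n) = n := by simp [trace]

theorem trace_allOnes_sub_one (n : ℕ) : trace (allOnes n - 1) = 0 := by
  simp [trace_sub, trace_allOnes]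

theorem trace_allOnes_transpose_mul_allOnes (n : ℕ) :
    trace ((allOnes n)ᵀ * allOnes n) = n ^ 2 := by
  simp [trace, mul_apply, sq]

noncomputable def projX0 (n : ℕ) : Matrix (Fin n × Fin n) (Fin n × Fin n) ℝ :=
  ((n : ℝ) ^ 2 - n)⁻¹ • (bigJ n - 1 - bigT n) + (n : ℝ)⁻¹ • 1

theorem one_mem_Lperp (n : ℕ) : (1 : Matrix (Fin n × Fin n) (Fin n × Fin n) ℝ) ∈ Lperp n := by
  have hsum : (1 : Matrix (Fin n × Fin n) (Fin n × Fin n) ℝ) = ∑ j, 1 ⊗ₖ single j j (1 : ℝ) :=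
    calc 1 = (1 : Matrix (Fin n) (Fin n) ℝ) ⊗ₖ ∑ j, single j j (1 : ℝ) := by
          rw [sum_single_one, one_kronecker_one]
      _ = _ := map_sum (kroneckerBilinear (R := ℝ) (1 : Matrix (Fin n) (Fin n) ℝ)) _ _
  rw [hsum]
  exact Submodule.sum_mem _ fun j _ => Submodule.subset_span (Or.inl (Or.inl ⟨j, rfl⟩))

theorem projX0_mem_Lperp (n : ℕ) : projX0 n ∈ Lperp n := by
  have hT : bigT n ∈ Lperp n := Submodule.subset_span (Or.inr (Or.inl rfl))
  have hJ : bigJ n ∈ Lperp n := Submodule.subset_span (Or.inr (Or.inr rfl))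
  have h1 := one_mem_Lperp n
  exact Submodule.add_mem _
    (Submodule.smul_mem _ _ (Submodule.sub_mem _ (Submodule.sub_mem _ hJ h1) hT))
    (Submodule.smul_mem _ _ h1)

theorem trace_sub_projX0_transpose_mul_kronecker (n : ℕ) (A B : Matrix (Fin n) (Fin n) ℝ) :
    trace ((bigX0 n - projX0 n)ᵀ * (A ⊗ₖ B)) = trace (Aᵀ * B)
      - ((n : ℝ) ^ 2 - n)⁻¹ * (trace ((allOnes n - 1)ᵀ * A) * trace ((allOnes n - 1)ᵀ * B))
      - (n : ℝ)⁻¹ * (trace A * trace B) := by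
  rw [projX0, bigJ_sub_one_sub_bigT, ← one_kronecker_one, transpose_sub, transpose_add,
    transpose_smul, transpose_smul, Matrix.sub_mul, Matrix.add_mul, Matrix.smul_mul,
    Matrix.smul_mul, trace_sub, trace_add, trace_smul, trace_smul, smul_eq_mul, smul_eq_mul,
    trace_bigX0_transpose_mul_kronecker, trace_transpose_kronecker_mul_kronecker,
    trace_transpose_kronecker_mul_kronecker, transpose_one, Matrix.one_mul, Matrix.one_mul,
    sub_sub]

theorem trace_sub_projX0_transpose_mul_eq_zero (n : ℕ)
    {M : Matrix (Fin n × Fin n) (Fin n × Fin n) ℝ} (hM : M ∈ Lperp n) :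
    trace ((bigX0 n - projX0 n)ᵀ * M) = 0 := by
  refine trace_transpose_mul_eq_zero_of_mem_span ?_ hM
  rintro M ((⟨j, rfl⟩ | ⟨j, rfl⟩) | rfl | rfl)
  · have hn : (n : ℝ) ≠ 0 := Nat.cast_ne_zero.mpr (Fin.pos j).ne'
    rw [trace_sub_projX0_transpose_mul_kronecker]
    simp only [transpose_one, Matrix.one_mul, trace_transpose, trace_allOnes_sub_one, trace_one,
      trace_single_eq_same, Fintype.card_fin, zero_mul, mul_zero, sub_zero, mul_one,
      inv_mul_cancel₀ hn, sub_self]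
  · have hn : (n : ℝ) ≠ 0 := Nat.cast_ne_zero.mpr (Fin.pos j).ne'
    rw [trace_sub_projX0_transpose_mul_kronecker]
    simp only [Matrix.mul_one, trace_transpose, trace_allOnes_sub_one, trace_one,
      trace_single_eq_same, Fintype.card_fin, mul_zero, sub_zero, one_mul, inv_mul_cancel₀ hn,
      sub_self]
  · rw [bigT_eq_kronecker, Matrix.mul_add, trace_add, trace_sub_projX0_transpose_mul_kronecker,
      trace_sub_projX0_transpose_mul_kronecker]
    simp only [transpose_one, Matrix.one_mul, Matrix.mul_one, trace_transpose,
      trace_allOnes_sub_one, zero_mul, mul_zero, sub_zero, add_zero]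
  · rw [bigJ_eq_allOnes_kronecker_allOnes, trace_sub_projX0_transpose_mul_kronecker]
    simp only [trace_allOnes_transpose_mul_allOnes, trace_allOnes, transpose_sub, transpose_one,
      Matrix.sub_mul, Matrix.one_mul, trace_sub]
    rw [← mul_assoc, inv_mul_mul_self, ← mul_assoc, inv_mul_mul_self]
    ring

theorem X0_projection_general (n : ℕ) :
    (((n : ℝ) ^ 2 - n)⁻¹ • (bigJ n - 1 - bigT n) + (n : ℝ)⁻¹ • 1 ∈ Lperp n) ∧
    ∀ M ∈ Lperp n,
      Matrix.trace
        ((bigX0 n - (((n : ℝ) ^ 2 - n)⁻¹ • (bigJ n - 1 - bigT n) + (n : ℝ)⁻¹ • 1))ᵀ * M)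
        = 0 :=
  ⟨projX0_mem_Lperp n, fun _ hM => trace_sub_projX0_transpose_mul_eq_zero n hM⟩

/-- The orthogonal projection of `X₀` onto `ℒ^⊥` (with respect to the trace inner
product) equals `(1/(n²-n))(J - I - T) + (1/n) I`: it lies in `ℒ^⊥` and the residual
is orthogonal to `ℒ^⊥`. -/
theorem X0_projection (n : ℕ) (hn : 1 < n) :
    (((n : ℝ) ^ 2 - n)⁻¹ • (bigJ n - 1 - bigT n) + (n : ℝ)⁻¹ • 1 ∈ Lperp n) ∧
    ∀ M ∈ Lperp n,
      Matrix.trace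
        ((bigX0 n - (((n : ℝ) ^ 2 - n)⁻¹ • (bigJ n - 1 - bigT n) + (n : ℝ)⁻¹ • 1))ᵀ * M)
        = 0 :=
  X0_projection_general n
end
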